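/- σ_3(6,10) ≤ 1/2: for all sufficiently large n and every e with e ≤ (1/4 − o(1))·C(n,3) or e ≥ (3/4 − o(1))·C(n,3), there exists a 3-uniform hypergraph on n vertices with e edges having no induced sub-hypergraph on 6 vertices with exactly 10 edges. -/

import Mathlib

open Finset
open scoped Classical

/-- `(n,e) →_r (m,f)`: every `r`-uniform hypergraph on `n` vertices with `e` edges
has an induced sub-hypergraph on `m` vertices with exactly `f` edges. -/
def PairArrows (r n e m f : ℕ) : Prop :=
  ∀ G : Finset (Finset (Fin n)), (∀ s ∈ G, s.card = r) → G.card = e →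
    ∃ S : Finset (Fin n), S.card = m ∧ (G.filter (fun t => t ⊆ S)).card = f

/-- The density `σ_r(m,f)`. -/
noncomputable def sigmaR (r m f : ℕ) : ℝ :=
  Filter.limsup
    (fun n : ℕ =>
      (((Finset.range (n.choose r + 1)).filter (fun e => PairArrows r n e m f)).card : ℝ) /
        (n.choose r : ℝ))
    Filter.atTop

/-!
Read the vertices `0, 1, …, n - 1` in base 3. A triple is an edge of the iterated blow-up `G` of
a triple when, at the lowest ternary digit where its elements are not all equal, they are
pairwise distinct. On any vertex set, `G` is the blow-up of one triple whose parts are the residue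
classes mod 3, each part carrying a copy of `G` (drop the last digit). A superadditivity induction
along this recursion bounds the number of edges on `m` vertices by `0, 0, 0, 1, 2, 4, 8` for
`m ≤ 6` and by `(m³ - m) / 24` in general, while the balanced split of `range n` gives at least
`C(n,3) / 4` edges.

So every 6-set spans at most 8 edges of `G` and at least `20 - 8 = 12` edges of its complement.
Subgraphs of `G` and supergraphs of its complement realise every `e ≤ |G|` and every
`e ≥ C(n,3) - |G|` with no 6-set spanning exactly 10 edges. The arrowing `e` thus lie in an
interval of length at most `C(n,3) / 2`, and `|G| / C(n,3) → 1/4`.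
-/

lemma Finset.subset_filter_iff {α : Type*} {p : α → Prop} [DecidablePred p] {s t : Finset α} :
    t ⊆ s.filter p ↔ t ⊆ s ∧ ∀ x ∈ t, p x := by
  simp only [subset_iff, mem_filter]
  exact ⟨fun h => ⟨fun x hx => (h hx).1, fun x hx => (h hx).2⟩,
    fun h x hx => ⟨h.1 hx, h.2 x hx⟩⟩

lemma card_filter_powersetCard_map {α β : Type*} (f : α ↪ β) (S : Finset α) (k : ℕ)
    (p : Finset β → Prop) :
    #(((S.map f).powersetCard k).filter p) = #((S.powersetCard k).filter fun t => p (t.map f)) := by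
  rw [powersetCard_map, filter_map, card_map]
  rfl

section Extremal

variable {α : Type*} [DecidableEq α] {H : Finset (Finset α)} {m b e : ℕ}

lemma exists_subset_card_eq_forall_card_filter_subset_le
    (hH : ∀ S : Finset α, #S = m → #(H.filter (· ⊆ S)) ≤ b) (he : e ≤ #H) :
    ∃ G ⊆ H, #G = e ∧ ∀ S : Finset α, #S = m → #(G.filter (· ⊆ S)) ≤ b := by
  obtain ⟨G, hGH, hG⟩ := exists_subset_card_eq he
  exact ⟨G, hGH, hG, fun S hS => (card_le_card (filter_subset_filter _ hGH)).trans (hH S hS)⟩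

lemma exists_card_eq_forall_le_card_filter_subset [Fintype α] {k : ℕ}
    (hHk : H ⊆ univ.powersetCard k)
    (hH : ∀ S : Finset α, #S = m → #(H.filter (· ⊆ S)) ≤ b)
    (he : (Fintype.card α).choose k - #H ≤ e) (he' : e ≤ (Fintype.card α).choose k) :
    ∃ G ⊆ univ.powersetCard k, #G = e ∧
      ∀ S : Finset α, #S = m → m.choose k - b ≤ #(G.filter (· ⊆ S)) := by
  obtain ⟨G, hcompl, hG, hGe⟩ := exists_subsuperset_card_eq (n := e) (sdiff_subset (t := H))
    (by rwa [card_sdiff_of_subset hHk, card_powersetCard, card_univ])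
    (by rwa [card_powersetCard, card_univ])
  refine ⟨G, hG, hGe, fun S hS => ?_⟩
  calc m.choose k - b ≤ #(S.powersetCard k) - #(H.filter (· ⊆ S)) := by
        rw [card_powersetCard, hS]
        exact Nat.sub_le_sub_left (hH S hS) _
    _ ≤ #(S.powersetCard k \ H.filter (· ⊆ S)) := le_card_sdiff _ _
    _ ≤ #(G.filter (· ⊆ S)) := card_le_card fun t ht => by
        simp only [mem_sdiff, mem_powersetCard, mem_filter] at ht ⊢
        exact ⟨hcompl (mem_sdiff.2 ⟨by simp [ht.1.2], fun h => ht.2 ⟨h, ht.1.1⟩⟩),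
          ht.1.1⟩

end Extremal

lemma sigmaR_le_of_eventually_le {r m f : ℕ} {c : ℝ} (hc : 0 ≤ c)
    (h : ∀ᶠ n in Filter.atTop,
      (#((range (n.choose r + 1)).filter fun e => PairArrows r n e m f) : ℝ) ≤ c * n.choose r) :
    sigmaR r m f ≤ c := by
  refine Filter.limsup_le_of_le (Filter.isCoboundedUnder_le_of_le _ fun n => by positivity) ?_
  filter_upwards [h] with n hn
  exact div_le_of_le_mul₀ (by positivity) hc hn

def IsBlowupEdge (t : Finset ℕ) : Prop :=
  ∃ i, (∀ x ∈ t, ∀ y ∈ t, x % 3 ^ i = y % 3 ^ i) ∧ Set.InjOn (fun x => x / 3 ^ i % 3) t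

def appendDigit (r : ℕ) : ℕ ↪ ℕ :=
  ⟨fun q => 3 * q + r, fun a b h => by simp only at h; omega⟩

lemma appendDigit_apply (r q : ℕ) : appendDigit r q = 3 * q + r := rfl

lemma appendDigit_div_three {r : ℕ} (hr : r < 3) (q : ℕ) : appendDigit r q / 3 = q := by
  rw [appendDigit_apply]; omega

lemma appendDigit_mod_pow_succ {r : ℕ} (hr : r < 3) (q i : ℕ) :
    appendDigit r q % 3 ^ (i + 1) = 3 * (q % 3 ^ i) + r := by
  rw [pow_succ', Nat.mod_mul, appendDigit_div_three hr, appendDigit_apply]; omega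

lemma appendDigit_div_pow_succ {r : ℕ} (hr : r < 3) (q i : ℕ) :
    appendDigit r q / 3 ^ (i + 1) = q / 3 ^ i := by
  rw [pow_succ', ← Nat.div_div_eq_div_mul, appendDigit_div_three hr]

lemma IsBlowupEdge.of_injOn {t : Finset ℕ} (h : Set.InjOn (· % 3) (t : Set ℕ)) :
    IsBlowupEdge t :=
  ⟨0, by simp [Nat.mod_one], by simpa using h⟩

lemma IsBlowupEdge.injOn_or_mod_eq {t : Finset ℕ} (h : IsBlowupEdge t) :
    Set.InjOn (· % 3) (t : Set ℕ) ∨ ∀ x ∈ t, ∀ y ∈ t, x % 3 = y % 3 := by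
  obtain ⟨_ | i, hmod, hinj⟩ := h
  · left; simpa using hinj
  · right
    intro x hx y hy
    have := hmod x hx y hy
    rw [pow_succ', Nat.mod_mul, Nat.mod_mul (x := y)] at this
    omega

lemma isBlowupEdge_map_appendDigit {r : ℕ} (hr : r < 3) (t : Finset ℕ) :
    IsBlowupEdge (t.map (appendDigit r)) ↔ IsBlowupEdge t := by
  constructor
  · rintro ⟨_ | i, hmod, hinj⟩
    · refine .of_injOn fun x hx y hy _ => (appendDigit r).injective <|
        hinj (mem_map_of_mem _ hx) (mem_map_of_mem _ hy) ?_
      simp only [pow_zero, Nat.div_one, appendDigit_apply]; omega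
    · refine ⟨i, fun x hx y hy => ?_, fun x hx y hy hxy => ?_⟩
      · have := hmod _ (mem_map_of_mem _ hx) _ (mem_map_of_mem _ hy)
        rw [appendDigit_mod_pow_succ hr, appendDigit_mod_pow_succ hr] at this
        omega
      · refine (appendDigit r).injective (hinj (mem_map_of_mem _ hx) (mem_map_of_mem _ hy) ?_)
        simpa only [appendDigit_div_pow_succ hr] using hxy
  · rintro ⟨i, hmod, hinj⟩
    refine ⟨i + 1, ?_, ?_⟩
    · simp only [forall_mem_map, appendDigit_mod_pow_succ hr]
      intro x hx y hy
      rw [hmod x hx y hy]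
    · simp only [Set.InjOn, coe_map, Set.forall_mem_image, mem_coe, appendDigit_div_pow_succ hr]
      intro x hx y hy hxy
      rw [hinj hx hy hxy]

def rainbowTriples (S : Finset ℕ) : Finset (Finset ℕ) :=
  (S.powersetCard 3).filter fun t => Set.InjOn (· % 3) (t : Set ℕ)

noncomputable def blowupEdges (S : Finset ℕ) : Finset (Finset ℕ) :=
  (S.powersetCard 3).filter IsBlowupEdge

def blowupPart (S : Finset ℕ) (r : ℕ) : Finset ℕ := (S.filter (· % 3 = r)).image (· / 3)

lemma mem_rainbowTriples {S t : Finset ℕ} :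
    t ∈ rainbowTriples S ↔ t ⊆ S ∧ #t = 3 ∧ Set.InjOn (· % 3) (t : Set ℕ) := by
  rw [rainbowTriples, mem_filter, mem_powersetCard, and_assoc]

lemma mem_blowupEdges {S t : Finset ℕ} :
    t ∈ blowupEdges S ↔ t ⊆ S ∧ #t = 3 ∧ IsBlowupEdge t := by
  rw [blowupEdges, mem_filter, mem_powersetCard, and_assoc]

lemma exists_mem_mod_three_eq {t : Finset ℕ} (ht : #t = 3) (h : Set.InjOn (· % 3) (t : Set ℕ))
    {r : ℕ} (hr : r < 3) : ∃ x ∈ t, x % 3 = r := by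
  have himage : t.image (· % 3) = range 3 :=
    eq_of_subset_of_card_le (image_subset_iff.2 fun x _ => mem_range.2 (Nat.mod_lt x three_pos))
      (by rw [card_image_of_injOn h, ht, card_range])
  simpa using (himage ▸ mem_range.2 hr : r ∈ t.image (· % 3))

lemma card_rainbowTriples (S : Finset ℕ) :
    #(rainbowTriples S) =
      #(S.filter (· % 3 = 0)) * #(S.filter (· % 3 = 1)) * #(S.filter (· % 3 = 2)) := by
  rw [← card_product, ← card_product]
  symm
  refine card_bij (fun p _ => {p.1.1, p.1.2, p.2}) ?_ ?_ ?_
  · rintro ⟨⟨a, b⟩, c⟩ hp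
    simp only [mem_product, mem_filter] at hp
    obtain ⟨⟨⟨ha, ha'⟩, hb, hb'⟩, hc, hc'⟩ := hp
    rw [mem_rainbowTriples]
    refine ⟨by simp [insert_subset_iff, ha, hb, hc],
      card_eq_three.2 ⟨a, b, c, by omega, by omega, by omega, rfl⟩, ?_⟩
    simp only [Set.InjOn, coe_insert, coe_singleton, Set.mem_insert_iff, Set.mem_singleton_iff]
    rintro x (rfl | rfl | rfl) y (rfl | rfl | rfl) _ <;> omega
  · rintro ⟨⟨a, b⟩, c⟩ hp ⟨⟨a', b'⟩, c'⟩ hp' h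
    simp only [mem_product, mem_filter] at hp hp'
    dsimp only at h
    have mem (x) (hx : x ∈ ({a, b, c} : Finset ℕ)) : x = a' ∨ x = b' ∨ x = c' := by
      simpa [h] using hx
    have := mem a (by simp)
    have := mem b (by simp)
    have := mem c (by simp)
    simp only [Prod.mk.injEq]
    omega
  · intro t ht
    obtain ⟨hS, ht, hinj⟩ := mem_rainbowTriples.1 ht
    obtain ⟨a, ha, ha'⟩ := exists_mem_mod_three_eq ht hinj (r := 0) (by norm_num)
    obtain ⟨b, hb, hb'⟩ := exists_mem_mod_three_eq ht hinj (r := 1) (by norm_num)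
    obtain ⟨c, hc, hc'⟩ := exists_mem_mod_three_eq ht hinj (r := 2) (by norm_num)
    refine ⟨((a, b), c), by simp [hS ha, hS hb, hS hc, ha', hb', hc'], ?_⟩
    exact eq_of_subset_of_card_le (by simp [insert_subset_iff, ha, hb, hc])
      (by rw [ht, card_eq_three.2 ⟨a, b, c, by omega, by omega, by omega, rfl⟩])

lemma map_blowupPart {r : ℕ} (hr : r < 3) (S : Finset ℕ) :
    (blowupPart S r).map (appendDigit r) = S.filter (· % 3 = r) := by
  ext x
  simp only [blowupPart, mem_map, mem_image, mem_filter, appendDigit_apply]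
  constructor
  · rintro ⟨_, ⟨y, ⟨hy, rfl⟩, rfl⟩, rfl⟩
    exact ⟨by rwa [Nat.div_add_mod], by omega⟩
  · rintro ⟨hx, rfl⟩
    exact ⟨x / 3, ⟨x, ⟨hx, rfl⟩, rfl⟩, by omega⟩

lemma card_blowupPart {r : ℕ} (hr : r < 3) (S : Finset ℕ) :
    #(blowupPart S r) = #(S.filter (· % 3 = r)) := by
  rw [← map_blowupPart hr, card_map]

lemma card_blowupEdges_filter_mod_three {r : ℕ} (hr : r < 3) (S : Finset ℕ) :
    #(blowupEdges (S.filter (· % 3 = r))) = #(blowupEdges (blowupPart S r)) := by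
  rw [blowupEdges, ← map_blowupPart hr, card_filter_powersetCard_map]
  simp only [isBlowupEdge_map_appendDigit hr, blowupEdges]

lemma blowupEdges_eq_union (S : Finset ℕ) :
    blowupEdges S =
      rainbowTriples S ∪ (range 3).biUnion fun r => blowupEdges (S.filter (· % 3 = r)) := by
  ext t
  simp only [mem_union, mem_biUnion, mem_range, mem_rainbowTriples, mem_blowupEdges,
    subset_filter_iff]
  constructor
  · rintro ⟨hS, ht, hedge⟩
    refine hedge.injOn_or_mod_eq.imp (fun hinj => ⟨hS, ht, hinj⟩) fun hmod => ?_
    obtain ⟨x, hx⟩ := card_pos.1 (by omega : 0 < #t)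
    exact ⟨x % 3, Nat.mod_lt x three_pos, ⟨hS, fun y hy => hmod y hy x hx⟩, ht, hedge⟩
  · rintro (⟨hS, ht, hinj⟩ | ⟨r, -, ⟨hS, -⟩, ht, hedge⟩)
    exacts [⟨hS, ht, .of_injOn hinj⟩, ⟨hS, ht, hedge⟩]

lemma card_blowupEdges (S : Finset ℕ) :
    #(blowupEdges S) = #(blowupPart S 0) * #(blowupPart S 1) * #(blowupPart S 2) +
      (#(blowupEdges (blowupPart S 0)) + #(blowupEdges (blowupPart S 1)) +
        #(blowupEdges (blowupPart S 2))) := by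
  have hdisj : Disjoint (rainbowTriples S)
      ((range 3).biUnion fun r => blowupEdges (S.filter (· % 3 = r))) := by
    simp only [disjoint_left, mem_rainbowTriples, mem_biUnion, mem_blowupEdges,
      subset_filter_iff, not_exists, not_and]
    intro t ⟨_, ht, hinj⟩ r _ ⟨_, hr⟩ _ _
    obtain ⟨x, hx, y, hy, hxy⟩ := one_lt_card.1 (by omega : 1 < #t)
    exact hxy (hinj hx hy ((hr x hx).trans (hr y hy).symm))
  have hpairwise : ((range 3 : Finset ℕ) : Set ℕ).PairwiseDisjoint
      fun r => blowupEdges (S.filter (· % 3 = r)) := by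
    intro r _ r' _ hrr'
    simp only [Function.onFun, disjoint_left, mem_blowupEdges, subset_filter_iff]
    rintro t ⟨⟨_, hr⟩, ht, _⟩ ⟨⟨_, hr'⟩, -, _⟩
    obtain ⟨x, hx⟩ := card_pos.1 (by omega : 0 < #t)
    exact hrr' ((hr x hx).symm.trans (hr' x hx))
  rw [blowupEdges_eq_union, card_union_of_disjoint hdisj, card_biUnion hpairwise,
    card_rainbowTriples]
  simp only [sum_range_succ, sum_range_zero, zero_add, card_blowupEdges_filter_mod_three,
    card_blowupPart, Nat.ofNat_pos, Nat.one_lt_ofNat, Nat.lt_add_one]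

lemma card_eq_sum_card_blowupPart (S : Finset ℕ) :
    #S = #(blowupPart S 0) + #(blowupPart S 1) + #(blowupPart S 2) := by
  rw [card_eq_sum_card_fiberwise (f := (· % 3)) (t := range 3)
    fun x _ => mem_range.2 (Nat.mod_lt x three_pos)]
  simp only [sum_range_succ, sum_range_zero, zero_add, card_blowupPart, Nat.ofNat_pos,
    Nat.one_lt_ofNat, Nat.lt_add_one]

lemma blowupPart_subset_range {S : Finset ℕ} {k : ℕ} (hS : S ⊆ range (3 ^ (k + 1)))
    (r : ℕ) :
    blowupPart S r ⊆ range (3 ^ k) := by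
  intro q hq
  obtain ⟨x, hx, rfl⟩ := mem_image.1 hq
  have := mem_range.1 (hS (mem_filter.1 hx).1)
  rw [pow_succ'] at this
  exact mem_range.2 (Nat.div_lt_of_lt_mul this)

lemma card_blowupEdges_le {α : Type*} [Semiring α] [PartialOrder α] [IsOrderedRing α]
    (f : ℕ → α) (m : ℕ) (hf₀ : 0 ≤ f 0) (hf₁ : 0 ≤ f 1)
    (hf : ∀ a b c, a + b + c ≤ m →
      ((a * b * c : ℕ) : α) + (f a + f b + f c) ≤ f (a + b + c))
    (S : Finset ℕ) (hS : #S ≤ m) : (#(blowupEdges S) : α) ≤ f #S := by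
  suffices ∀ k, ∀ S : Finset ℕ, S ⊆ range (3 ^ k) → #S ≤ m →
      (#(blowupEdges S) : α) ≤ f #S from
    this (S.sup id) S (fun x hx => mem_range.2 ((le_sup (f := id) hx).trans_lt
      (Nat.lt_pow_self (by norm_num)))) hS
  intro k
  induction k with
  | zero =>
    intro S hS _
    have hS1 : #S ≤ 1 := by simpa using card_le_card hS
    rw [blowupEdges, powersetCard_eq_empty.2 (by omega), filter_empty, card_empty, Nat.cast_zero]
    interval_cases #S <;> assumption
  | succ k ih =>
    intro S hS hSm
    have hsum := card_eq_sum_card_blowupPart S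
    have hpart (r) : (#(blowupEdges (blowupPart S r)) : α) ≤ f #(blowupPart S r) :=
      ih _ (blowupPart_subset_range hS r) ((card_image_le.trans (card_filter_le _ _)).trans hSm)
    rw [card_blowupEdges, hsum]
    push_cast
    refine le_trans ?_ (hf _ _ _ (hsum ▸ hSm))
    push_cast
    gcongr <;> apply hpart

lemma card_blowupEdges_le_eight {S : Finset ℕ} (hS : #S = 6) : #(blowupEdges S) ≤ 8 := by
  -- the largest number of edges of an iterated blow-up on `m ≤ 6` vertices
  let f : ℕ → ℕ := fun m => [0, 0, 0, 1, 2, 4, 8].getD m 0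
  have hf : ∀ a < 7, ∀ b < 7, ∀ c < 7, a + b + c ≤ 6 →
      a * b * c + (f a + f b + f c) ≤ f (a + b + c) := by
    decide
  have h := card_blowupEdges_le f 6 le_rfl le_rfl
    (fun a b c h => by simpa using hf a (by omega) b (by omega) c (by omega) h) S hS.le
  rw [hS] at h
  exact h

lemma card_blowupEdges_le_cube (S : Finset ℕ) :
    24 * (#(blowupEdges S) : ℝ) ≤ #S ^ 3 - #S := by
  have h := card_blowupEdges_le (fun m => ((m : ℝ) ^ 3 - m) / 24) #S (by norm_num) (by norm_num)
    (fun a b c _ => by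
      push_cast
      nlinarith [mul_nonneg (Nat.cast_nonneg (α := ℝ) a) (sq_nonneg ((b : ℝ) - c)),
        mul_nonneg (Nat.cast_nonneg (α := ℝ) b) (sq_nonneg ((a : ℝ) - c)),
        mul_nonneg (Nat.cast_nonneg (α := ℝ) c) (sq_nonneg ((a : ℝ) - b))]) S le_rfl
  linarith

lemma blowupPart_range {r : ℕ} (hr : r < 3) (n : ℕ) :
    blowupPart (range n) r = range ((n + 2 - r) / 3) := by
  ext q
  simp only [blowupPart, mem_image, mem_filter, mem_range]
  constructor
  · rintro ⟨x, ⟨hx, rfl⟩, rfl⟩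
    omega
  · intro hq
    exact ⟨3 * q + r, ⟨by omega, by omega⟩, by omega⟩

lemma card_blowupEdges_range (n : ℕ) :
    #(blowupEdges (range n)) = (n + 2) / 3 * ((n + 1) / 3) * (n / 3) +
      (#(blowupEdges (range ((n + 2) / 3))) + #(blowupEdges (range ((n + 1) / 3))) +
        #(blowupEdges (range (n / 3)))) := by
  rw [card_blowupEdges, blowupPart_range three_pos, blowupPart_range (by norm_num : 1 < 3),
    blowupPart_range (by norm_num : 2 < 3)]
  simp only [card_range, Nat.sub_zero, Nat.add_sub_cancel]
  rfl

lemma cast_choose_three (a : ℕ) : (a.choose 3 : ℝ) = a * (a - 1) * (a - 2) / 6 := by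
  rw [Nat.cast_choose_eq_descPochhammer_div]
  simp [descPochhammer_succ_right, Nat.factorial]

lemma choose_three_add_add_le {a b c : ℕ} (hcb : c ≤ b) (hba : b ≤ a) (hac : a ≤ c + 1) :
    (a + b + c).choose 3 ≤ 4 * (a * b * c) + (a.choose 3 + b.choose 3 + c.choose 3) := by
  have hcb : (c : ℝ) ≤ b := mod_cast hcb
  have hba : (b : ℝ) ≤ a := mod_cast hba
  have hac : (a : ℝ) ≤ c + 1 := mod_cast hac
  have hc : (0 : ℝ) ≤ c := c.cast_nonneg
  rw [← Nat.cast_le (α := ℝ)]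
  push_cast
  simp only [cast_choose_three]
  push_cast
  nlinarith [mul_nonneg hc (sub_nonneg.2 hcb), mul_nonneg (sub_nonneg.2 hcb) (sub_nonneg.2 hba),
    mul_nonneg (sub_nonneg.2 hba) (sub_nonneg.2 hac), mul_nonneg hc (sub_nonneg.2 hac),
    mul_nonneg (sub_nonneg.2 hcb) (sub_nonneg.2 hac), mul_nonneg hc (sub_nonneg.2 hba)]

lemma choose_three_le_four_mul_card_blowupEdges_range (n : ℕ) :
    n.choose 3 ≤ 4 * #(blowupEdges (range n)) := by
  induction n using Nat.strong_induction_on with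
  | _ n ih =>
    rcases lt_or_ge n 3 with hn | hn
    · simp [Nat.choose_eq_zero_of_lt hn]
    · have h0 := ih ((n + 2) / 3) (by omega)
      have h1 := ih ((n + 1) / 3) (by omega)
      have h2 := ih (n / 3) (by omega)
      have hsplit := choose_three_add_add_le (a := (n + 2) / 3) (b := (n + 1) / 3) (c := n / 3)
        (by omega) (by omega) (by omega)
      rw [show (n + 2) / 3 + (n + 1) / 3 + n / 3 = n by omega] at hsplit
      rw [card_blowupEdges_range]
      omega

noncomputable def blowupDensity (n : ℕ) : ℝ := #(blowupEdges (range n)) / n.choose 3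

lemma one_fourth_le_blowupDensity {n : ℕ} (hn : 3 ≤ n) : 1 / 4 ≤ blowupDensity n := by
  have h4 : (n.choose 3 : ℝ) ≤ 4 * #(blowupEdges (range n)) :=
    mod_cast choose_three_le_four_mul_card_blowupEdges_range n
  rw [blowupDensity, le_div_iff₀ (mod_cast Nat.choose_pos hn)]
  linarith

lemma blowupDensity_le {n : ℕ} (hn : 3 ≤ n) : blowupDensity n ≤ 1 / 4 + 3 / n := by
  have hn' : (3 : ℝ) ≤ n := mod_cast hn
  have hcube := card_blowupEdges_le_cube (range n)
  rw [card_range] at hcube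
  rw [blowupDensity, div_le_iff₀ (mod_cast Nat.choose_pos hn), cast_choose_three]
  field_simp
  nlinarith

lemma tendsto_blowupDensity : Filter.Tendsto blowupDensity Filter.atTop (nhds (1 / 4)) := by
  have hupper :
      Filter.Tendsto (fun n : ℕ => 1 / 4 + 3 / (n : ℝ)) Filter.atTop (nhds (1 / 4)) := by
    simpa using (tendsto_const_div_atTop_nhds_zero_nat (3 : ℝ)).const_add (1 / 4 : ℝ)
  refine tendsto_of_tendsto_of_tendsto_of_le_of_le' tendsto_const_nhds hupper ?_ ?_ <;>
    filter_upwards [Filter.eventually_ge_atTop 3] with n hn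
  exacts [one_fourth_le_blowupDensity hn, blowupDensity_le hn]

lemma le_card_blowupEdges_range_or_le {n e : ℕ} (hn : 3 ≤ n)
    (h : (e : ℝ) ≤ blowupDensity n * n.choose 3 ∨
      (1 / 2 + blowupDensity n) * n.choose 3 ≤ e) :
    e ≤ #(blowupEdges (range n)) ∨ n.choose 3 - #(blowupEdges (range n)) ≤ e := by
  have hE : blowupDensity n * n.choose 3 = #(blowupEdges (range n)) :=
    div_mul_cancel₀ _ (mod_cast (Nat.choose_pos hn).ne')
  have h4 : (n.choose 3 : ℝ) ≤ 4 * #(blowupEdges (range n)) :=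
    mod_cast choose_three_le_four_mul_card_blowupEdges_range n
  rw [add_mul, hE] at h
  refine h.imp (fun h => by exact_mod_cast h) fun h => ?_
  have : n.choose 3 ≤ e + #(blowupEdges (range n)) := by
    rw [← Nat.cast_le (α := ℝ)]
    push_cast
    linarith
  omega

noncomputable def blowupHypergraph (n : ℕ) : Finset (Finset (Fin n)) :=
  (univ.powersetCard 3).filter fun s => IsBlowupEdge (s.map Fin.valEmbedding)

lemma card_filter_subset_blowupHypergraph {n : ℕ} (S : Finset (Fin n)) :
    #((blowupHypergraph n).filter (· ⊆ S)) = #(blowupEdges (S.map Fin.valEmbedding)) := by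
  rw [blowupEdges, card_filter_powersetCard_map]
  congr 1
  ext t
  simp only [blowupHypergraph, mem_filter, mem_powersetCard, subset_univ, true_and]
  tauto

lemma card_blowupHypergraph (n : ℕ) : #(blowupHypergraph n) = #(blowupEdges (range n)) := by
  simpa [← Nat.Iio_eq_range] using card_filter_subset_blowupHypergraph (univ : Finset (Fin n))

lemma card_filter_subset_blowupHypergraph_le {n : ℕ} {S : Finset (Fin n)} (hS : #S = 6) :
    #((blowupHypergraph n).filter (· ⊆ S)) ≤ 8 := by
  rw [card_filter_subset_blowupHypergraph]
  exact card_blowupEdges_le_eight (by rw [card_map, hS])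

lemma exists_hypergraph_card_eq_not_six_ten {n e : ℕ} (he : e ≤ n.choose 3)
    (h : e ≤ #(blowupEdges (range n)) ∨ n.choose 3 - #(blowupEdges (range n)) ≤ e) :
    ∃ G : Finset (Finset (Fin n)), (∀ s ∈ G, #s = 3) ∧ #G = e ∧
      ¬∃ S : Finset (Fin n), #S = 6 ∧ #(G.filter (· ⊆ S)) = 10 := by
  have hH : blowupHypergraph n ⊆ univ.powersetCard 3 := filter_subset _ _
  have hsix (S : Finset (Fin n)) (hS : #S = 6) := card_filter_subset_blowupHypergraph_le hS
  rw [← card_blowupHypergraph] at h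
  rcases h with hlow | hhigh
  · obtain ⟨G, hGH, hG, hG8⟩ := exists_subset_card_eq_forall_card_filter_subset_le hsix hlow
    refine ⟨G, fun s hs => (mem_powersetCard.1 (hH (hGH hs))).2, hG, ?_⟩
    rintro ⟨S, hS, h10⟩
    have := hG8 S hS
    omega
  · obtain ⟨G, hG3, hG, hG12⟩ := exists_card_eq_forall_le_card_filter_subset hH hsix
      (by simpa using hhigh) (by simpa using he)
    refine ⟨G, fun s hs => (mem_powersetCard.1 (hG3 hs)).2, hG, ?_⟩
    rintro ⟨S, hS, h10⟩
    have := hG12 S hS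
    simp [h10, Nat.choose] at this

lemma card_filter_pairArrows_le (n : ℕ) :
    (#((range (n.choose 3 + 1)).filter fun e => PairArrows 3 n e 6 10) : ℝ) ≤
      1 / 2 * n.choose 3 := by
  have hsub : (range (n.choose 3 + 1)).filter (fun e => PairArrows 3 n e 6 10) ⊆
      Ioo #(blowupEdges (range n)) (n.choose 3 - #(blowupEdges (range n))) := by
    intro e he
    rw [mem_filter, mem_range] at he
    rw [mem_Ioo]
    by_contra h
    obtain ⟨G, hG3, hG, hfree⟩ :=
      exists_hypergraph_card_eq_not_six_ten (n := n) (e := e) (by omega) (by omega)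
    exact hfree (he.2 G hG3 hG)
  have hIoo := (card_le_card hsub).trans_eq (Nat.card_Ioo _ _)
  have h4 := choose_three_le_four_mul_card_blowupEdges_range n
  have : 2 * #((range (n.choose 3 + 1)).filter fun e => PairArrows 3 n e 6 10) ≤ n.choose 3 := by
    omega
  rw [← Nat.cast_le (α := ℝ)] at this
  push_cast at this
  linarith

/-- `σ_3(6,10) ≤ 1/2`: there is a function `g = o(1)` such that for all sufficiently
large `n`, every `e ≤ (1/4 - g n)·C(n,3)` and every `e ≥ (3/4 - g n)·C(n,3)` is
realised by a 3-graph on `n` vertices with no induced sub-hypergraph on 6 vertices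
and exactly 10 edges. -/
theorem sigma_six_ten_le_half :
    sigmaR 3 6 10 ≤ 1 / 2 ∧
    ∃ g : ℕ → ℝ, Filter.Tendsto g Filter.atTop (nhds 0) ∧
      ∃ N : ℕ, ∀ n ≥ N, ∀ e ≤ n.choose 3,
        ((e : ℝ) ≤ (1 / 4 - g n) * (n.choose 3 : ℝ) ∨
          (3 / 4 - g n) * (n.choose 3 : ℝ) ≤ (e : ℝ)) →
        ∃ G : Finset (Finset (Fin n)), (∀ s ∈ G, s.card = 3) ∧ G.card = e ∧
          ¬ ∃ S : Finset (Fin n), S.card = 6 ∧ (G.filter (fun t => t ⊆ S)).card = 10 := by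
  refine ⟨sigmaR_le_of_eventually_le (by norm_num) (.of_forall card_filter_pairArrows_le),
    fun n => 1 / 4 - blowupDensity n, ?_, 3, fun n hn e he h =>
      exists_hypergraph_card_eq_not_six_ten he (le_card_blowupEdges_range_or_le hn ?_)⟩
  · simpa using (tendsto_const_nhds (x := (1 / 4 : ℝ))).sub tendsto_blowupDensity
  · rwa [sub_sub_cancel,
      show (3 : ℝ) / 4 - (1 / 4 - blowupDensity n) = 1 / 2 + blowupDensity n by ring] at h
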